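/- (Explicit solution of the majorizing Volterra equation) Let k1 > 0, μ ≥ 0, σ ∈ [0,1), 0 < λ1 ≤ λ2 and E(0) > 0, and set a := (1/2)k1 E(0)(1+λ2)^μ λ1^{−σ}. Then the function E(x,t) := E(0)·exp( a x (e^t − 1) + t ) satisfies, for all x > 0 and all t ≥ 0, the integral equation E(x,t) = E(0) + ∫₀^t [ (1/2)k1(1+λ2)^μ λ1^{−σ} (E ∗ E)(x,s) + E(x,s) ] ds, where (E ∗ E)(x,s) := ∫₀^x E(y,s)E(x−y,s)dy is convolution in the first variable. -/

import Mathlib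

open MeasureTheory Set Real

noncomputable section

/-! The exponent of `E(·, s)` is affine in the mass variable, so `E(y, s) E(x − y, s)` does not
depend on `y` and the convolution is `x E(0)² exp(a x (eˢ − 1) + 2s)`. With `a = c E(0)`, where `c`
is the coefficient of the convolution, the integrand is then exactly `∂ₛ E(x, s)`, and the integral
equation is the fundamental theorem of calculus. -/

theorem intervalIntegral_mul_comp_sub_of_eq_mul_exp {C b d : ℝ} {f : ℝ → ℝ}
    (hf : ∀ y, f y = C * exp (b * y + d)) (x : ℝ) :
    ∫ y in (0:ℝ)..x, f y * f (x - y) = x * (C ^ 2 * exp (b * x + 2 * d)) := by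
  have hconst : ∀ y, f y * f (x - y) = C ^ 2 * exp (b * x + 2 * d) := fun y => by
    rw [hf, hf, mul_mul_mul_comm, ← exp_add]
    ring_nf
  simp only [hconst, intervalIntegral.integral_const, smul_eq_mul, sub_zero]

theorem hasDerivAt_mul_exp_mul_exp_sub_one_add (C b t : ℝ) :
    HasDerivAt (fun t => C * exp (b * (exp t - 1) + t))
      (b * C * exp (b * (exp t - 1) + 2 * t) + C * exp (b * (exp t - 1) + t)) t := by
  have hexponent : HasDerivAt (fun t => b * (exp t - 1) + t) (b * exp t + 1) t :=
    (((hasDerivAt_exp t).sub_const 1).const_mul b).add (hasDerivAt_id t)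
  refine (hexponent.exp.const_mul C).congr_deriv ?_
  rw [show b * (exp t - 1) + 2 * t = b * (exp t - 1) + t + t by ring,
    exp_add (b * (exp t - 1) + t) t]
  ring

theorem volterra_majorant_explicit_solution_general
    (k1 μ σ lam1 lam2 E0 : ℝ)
    (a : ℝ) (ha : a = (1 / 2) * k1 * E0 * (1 + lam2) ^ μ * lam1 ^ (-σ))
    (E : ℝ → ℝ → ℝ)
    (hE : ∀ x t : ℝ, E x t = E0 * Real.exp (a * x * (Real.exp t - 1) + t)) :
    ∀ x t : ℝ, 0 < x → 0 ≤ t →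
      E x t = E0 + ∫ s in (0:ℝ)..t,
        ((1 / 2) * k1 * (1 + lam2) ^ μ * lam1 ^ (-σ) *
          ∫ y in (0:ℝ)..x, E y s * E (x - y) s) + E x s := by
  intro x t _ _
  have hintegrand : ∀ s, ((1 / 2) * k1 * (1 + lam2) ^ μ * lam1 ^ (-σ) *
        ∫ y in (0:ℝ)..x, E y s * E (x - y) s) + E x s
      = a * x * E0 * exp (a * x * (exp s - 1) + 2 * s) + E0 * exp (a * x * (exp s - 1) + s) :=
    fun s => by
      rw [intervalIntegral_mul_comp_sub_of_eq_mul_exp (b := a * (exp s - 1)) (d := s)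
        (fun y => by rw [hE, mul_right_comm a]), hE, mul_right_comm a (exp s - 1) x, ha]
      ring
  have hcont : Continuous fun s =>
      a * x * E0 * exp (a * x * (exp s - 1) + 2 * s) + E0 * exp (a * x * (exp s - 1) + s) := by
    fun_prop
  simp only [hintegrand]
  rw [intervalIntegral.integral_eq_sub_of_hasDerivAt
    (fun s _ => hasDerivAt_mul_exp_mul_exp_sub_one_add E0 (a * x) s)
    (hcont.intervalIntegrable 0 t), hE]
  simp

/-- **Explicit solution of the majorizing Volterra equation.**  With
`a = (1/2) k1 E0 (1+λ2)^μ λ1^{−σ}`, the function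
`E(x,t) = E0 exp(a x (e^t − 1) + t)` satisfies the integral equation
`E(x,t) = E0 + ∫₀^t [ (1/2) k1 (1+λ2)^μ λ1^{−σ} (E ∗ E)(x,s) + E(x,s) ] ds`,
where `(E ∗ E)(x,s) = ∫₀^x E(y,s) E(x−y,s) dy`. -/
theorem volterra_majorant_explicit_solution
    (k1 μ σ lam1 lam2 E0 : ℝ) (hk1 : 0 < k1) (hμ : 0 ≤ μ)
    (hσ : σ ∈ Ico (0:ℝ) 1) (hlam1 : 0 < lam1) (hlam : lam1 ≤ lam2) (hE0 : 0 < E0)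
    (a : ℝ) (ha : a = (1 / 2) * k1 * E0 * (1 + lam2) ^ μ * lam1 ^ (-σ))
    (E : ℝ → ℝ → ℝ)
    (hE : ∀ x t : ℝ, E x t = E0 * Real.exp (a * x * (Real.exp t - 1) + t)) :
    ∀ x t : ℝ, 0 < x → 0 ≤ t →
      E x t = E0 + ∫ s in (0:ℝ)..t,
        ((1 / 2) * k1 * (1 + lam2) ^ μ * lam1 ^ (-σ) *
          ∫ y in (0:ℝ)..x, E y s * E (x - y) s) + E x s :=
  volterra_majorant_explicit_solution_general k1 μ σ lam1 lam2 E0 a ha E hE
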